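/- Let D : Fin n → ℝ^d be a design and let O ⊆ ℕ^d be an order ideal identifiable by D. Then no order ideal identifiable by D properly contains O if and only if for every γ in the corner set of O, the evaluation vector X^γ(D) lies in the linear span of {X^α(D) : α ∈ O}. -/

import Mathlib

/-!
A corner γ of an identifiable order ideal `O` can be added to `O` keeping it an order ideal, and
`O ∪ {γ}` stays identifiable exactly when `X^γ(D)` is not in the span of `(X^α(D))_{α ∈ O}`.
Conversely, any identifiable order ideal `O' ⊋ O` contains a corner γ of `O` (a minimal element
of `O' \ O`), and independence of `(X^α(D))_{α ∈ O ∪ {γ}}` keeps `X^γ(D)` out of that span.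
-/

open Finset

/-- An order ideal (hierarchical model) in ℕ^d: a finite set of exponent vectors
that is downward closed for the componentwise partial order. -/
def IsOrderIdeal {d : ℕ} (O : Finset (Fin d → ℕ)) : Prop :=
  ∀ α ∈ O, ∀ β : Fin d → ℕ, (∀ i, β i ≤ α i) → β ∈ O

/-- γ belongs to the corner set of O: γ is a minimal element of the complement of O
with respect to the componentwise partial order. -/
def InCorner {d : ℕ} (O : Finset (Fin d → ℕ)) (γ : Fin d → ℕ) : Prop :=
  γ ∉ O ∧ ∀ β : Fin d → ℕ, β ∉ O → (∀ i, β i ≤ γ i) → β = γ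

/-- Evaluation (design) vector of the monomial X^α at the design D. -/
def evalVec {n d : ℕ} (D : Fin n → Fin d → ℝ) (α : Fin d → ℕ) : Fin n → ℝ :=
  fun j => ∏ i, (D j i) ^ (α i)

/-- D' is a δ-perturbation of D. -/
def IsPerturbation {n d : ℕ} (δ : Fin d → ℝ) (D D' : Fin n → Fin d → ℝ) : Prop :=
  ∀ j : Fin n, ∀ i : Fin d, |D' j i - D j i| < δ i

/-- O is numerically stable for the empirical design (D, δ): for every δ-perturbation D'
of D, the family of evaluation vectors (X^α(D'))_{α ∈ O} is linearly independent. -/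
def NumStable {n d : ℕ} (D : Fin n → Fin d → ℝ) (δ : Fin d → ℝ)
    (O : Finset (Fin d → ℕ)) : Prop :=
  ∀ D' : Fin n → Fin d → ℝ, IsPerturbation δ D D' →
    LinearIndependent ℝ (fun α : {x // x ∈ O} => evalVec D' α.1)

/-- X^γ(D) numerically depends on O at (D, δ): there is a δ-perturbation D' of D such
that X^γ(D') lies in the linear span of the evaluation vectors of O at D'. -/
def NumDepends {n d : ℕ} (D : Fin n → Fin d → ℝ) (δ : Fin d → ℝ)
    (O : Finset (Fin d → ℕ)) (γ : Fin d → ℕ) : Prop :=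
  ∃ D' : Fin n → Fin d → ℝ, IsPerturbation δ D D' ∧
    evalVec D' γ ∈ Submodule.span ℝ ((fun α => evalVec D' α) '' (O : Set (Fin d → ℕ)))

section

variable {d : ℕ}

lemma IsOrderIdeal.insert_of_inCorner {O : Finset (Fin d → ℕ)} {γ : Fin d → ℕ}
    (hO : IsOrderIdeal O) (hγ : InCorner O γ) : IsOrderIdeal (insert γ O) := by
  intro α hα β hβα
  rw [mem_insert] at hα ⊢
  rcases hα with rfl | hα
  · by_cases hβ : β ∈ O
    · exact Or.inr hβ
    · exact Or.inl (hγ.2 β hβ hβα)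
  · exact Or.inr (hO α hα β hβα)

lemma IsOrderIdeal.inCorner_of_minimal_sdiff {O O' : Finset (Fin d → ℕ)} {γ : Fin d → ℕ}
    (hO' : IsOrderIdeal O') (hγ : Minimal (· ∈ O' \ O) γ) : InCorner O γ := by
  obtain ⟨hγO', hγO⟩ := mem_sdiff.1 hγ.prop
  refine ⟨hγO, fun β hβO hβγ => le_antisymm hβγ (hγ.2 ?_ hβγ)⟩
  exact mem_sdiff.2 ⟨hO' γ hγO' β hβγ, hβO⟩

lemma IsOrderIdeal.exists_inCorner_of_ssubset {O O' : Finset (Fin d → ℕ)}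
    (hO' : IsOrderIdeal O') (hOO' : O ⊂ O') : ∃ γ ∈ O', InCorner O γ := by
  obtain ⟨γ, hγ⟩ := Finset.exists_minimal (sdiff_nonempty.2 (not_subset_of_ssubset hOO'))
  exact ⟨γ, (mem_sdiff.1 hγ.prop).1, hO'.inCorner_of_minimal_sdiff hγ⟩

end

theorem stmt_15 {n d : ℕ} (D : Fin n → Fin d → ℝ) (O : Finset (Fin d → ℕ))
    (hO : IsOrderIdeal O)
    (hid : LinearIndependent ℝ (fun α : {x // x ∈ O} => evalVec D α.1)) :
    (¬ ∃ O' : Finset (Fin d → ℕ), IsOrderIdeal O' ∧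
        LinearIndependent ℝ (fun α : {x // x ∈ O'} => evalVec D α.1) ∧ O ⊂ O') ↔
    (∀ γ : Fin d → ℕ, InCorner O γ →
      evalVec D γ ∈ Submodule.span ℝ ((fun α => evalVec D α) '' (O : Set (Fin d → ℕ)))) := by
  constructor
  · intro hmax γ hγ
    by_contra hspan
    have hind : LinearIndepOn ℝ (evalVec D) (insert γ (O : Set (Fin d → ℕ))) :=
      (linearIndepOn_insert (mt mem_coe.1 hγ.1)).2 ⟨hid, hspan⟩
    rw [← coe_insert] at hind
    exact hmax ⟨insert γ O, hO.insert_of_inCorner hγ, hind, ssubset_insert hγ.1⟩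
  · rintro hspan ⟨O', hO', hind', hOO'⟩
    obtain ⟨γ, hγO', hγ⟩ := hO'.exists_inCorner_of_ssubset hOO'
    have hind : LinearIndepOn ℝ (evalVec D) (insert γ (O : Set (Fin d → ℕ))) :=
      LinearIndepOn.mono (s := (O' : Set (Fin d → ℕ))) hind'
        (Set.insert_subset hγO' hOO'.subset)
    exact hind.notMem_span_of_insert (mt mem_coe.1 hγ.1) (hspan γ hγ)
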